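/- arXiv:2103.11572 — 9 statements merged into one kernel-verified Lean document; each statement's English description precedes it below -/
import Mathlib

section
/- Let A and B be symmetric real n×n matrices and r ≥ 2 an integer, and suppose N_r = I_r ⊗ (A − B) + J_r ⊗ B is positive definite, where J_r denotes the r×r all-ones matrix and ⊗ the Kronecker product. Then: (i) A − B is positive definite; (ii) A + ℓ·B is positive definite for every ℓ = 1, 2, …, r−1; and (iii) A − ℓ·B·(A + (ℓ−1)·B)⁻¹·B is positive definite for every ℓ = 1, 2, …, r−1 (the inverse existing by (ii)). -/
/-!
Evaluate the quadratic form of `N = 1 ⊗ C + J ⊗ B`, `C = A - B`, on block vectors equal to `x`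
on the blocks indexed by `s`, to `y` on those indexed by a disjoint `t`, and to `0` elsewhere:
it is `|s| xᵀCx + |t| yᵀCy + (|s|x + |t|y)ᵀ B (|s|x + |t|y)`. Two singletons with `y = -x` give
`2 xᵀ(A - B)x`; `|s| = ℓ + 1` and `t = ∅` give `(ℓ + 1) xᵀ(A + ℓB)x`; and `|s| = 1`, `|t| = ℓ`
with the Schur-complement choice `y = -(A + (ℓ - 1)B)⁻¹Bx` give `xᵀ(A - ℓB(A + (ℓ - 1)B)⁻¹B)x`.
-/

open Matrix
open scoped Kronecker

/-- The `r × r` all-ones matrix over `ℝ`. -/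
def allOnes (r : ℕ) : Matrix (Fin r) (Fin r) ℝ := Matrix.of fun _ _ => 1

open Finset

section KroneckerMulVec

variable {ι κ R : Type*} [Fintype ι] [Fintype κ]

lemma uncurry_dotProduct_uncurry [NonUnitalNonAssocSemiring R] (v w : ι → κ → R) :
    Function.uncurry v ⬝ᵥ Function.uncurry w = ∑ i, v i ⬝ᵥ w i := by
  simp only [dotProduct, Fintype.sum_prod_type, Function.uncurry_apply_pair]

lemma one_kronecker_mulVec_uncurry [DecidableEq ι] [NonAssocSemiring R] (C : Matrix κ κ R)
    (w : ι → κ → R) :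
    ((1 : Matrix ι ι R) ⊗ₖ C) *ᵥ Function.uncurry w = Function.uncurry fun i => C *ᵥ w i := by
  ext ⟨i, k⟩
  simp [mulVec, dotProduct, Fintype.sum_prod_type, one_apply, ite_mul, sum_comm (γ := ι)]

lemma allOnes_kronecker_mulVec_uncurry {r : ℕ} (B : Matrix κ κ ℝ) (w : Fin r → κ → ℝ) :
    (allOnes r ⊗ₖ B) *ᵥ Function.uncurry w = Function.uncurry fun _ => B *ᵥ ∑ i, w i := by
  ext ⟨i, k⟩
  simp only [mulVec, dotProduct, allOnes, kroneckerMap_apply, of_apply, one_mul,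
    Fintype.sum_prod_type, Function.uncurry_apply_pair, Finset.sum_apply, mul_sum]
  rw [sum_comm]

end KroneckerMulVec

lemma sum_comp_ite_mem_ite_mem {ι V M : Type*} [Fintype ι] [DecidableEq ι] [Zero V]
    [AddCommMonoid M] {s t : Finset ι} (hst : Disjoint s t) (x y : V) (g : V → M) (hg : g 0 = 0) :
    ∑ i, g (if i ∈ s then x else if i ∈ t then y else 0) = #s • g x + #t • g y := by
  have h : ∀ i, g (if i ∈ s then x else if i ∈ t then y else 0)
      = (if i ∈ s then g x else 0) + (if i ∈ t then g y else 0) := by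
    intro i
    by_cases hs : i ∈ s
    · simp [hs, disjoint_left.1 hst hs]
    · by_cases ht : i ∈ t <;> simp [hs, ht, hg]
  simp only [h, sum_add_distrib, sum_ite_mem, univ_inter, sum_const]

section BlockVec

variable {ι κ : Type*} [DecidableEq ι]

def blockVec (s t : Finset ι) (x y : κ → ℝ) : ι × κ → ℝ :=
  Function.uncurry fun i => if i ∈ s then x else if i ∈ t then y else 0

lemma blockVec_ne_zero {s : Finset ι} (hs : s.Nonempty) (t : Finset ι) {x : κ → ℝ} (hx : x ≠ 0)
    (y : κ → ℝ) : blockVec s t x y ≠ 0 := by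
  obtain ⟨i, hi⟩ := hs
  obtain ⟨k, hk⟩ := Function.ne_iff.1 hx
  exact Function.ne_iff.2 ⟨(i, k), by simpa [blockVec, hi] using hk⟩

lemma blockVec_dotProduct_mulVec [Fintype κ] {r : ℕ} (C B : Matrix κ κ ℝ)
    {s t : Finset (Fin r)} (hst : Disjoint s t) (x y : κ → ℝ) :
    blockVec s t x y ⬝ᵥ ((1 ⊗ₖ C + allOnes r ⊗ₖ B) *ᵥ blockVec s t x y)
      = #s * (x ⬝ᵥ C *ᵥ x) + #t * (y ⬝ᵥ C *ᵥ y)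
        + ((#s : ℝ) • x + (#t : ℝ) • y) ⬝ᵥ B *ᵥ ((#s : ℝ) • x + (#t : ℝ) • y) := by
  rw [blockVec, add_mulVec, dotProduct_add, one_kronecker_mulVec_uncurry,
    allOnes_kronecker_mulVec_uncurry, uncurry_dotProduct_uncurry, uncurry_dotProduct_uncurry,
    ← sum_dotProduct, sum_comp_ite_mem_ite_mem hst x y (fun v => v ⬝ᵥ C *ᵥ v) (by simp),
    sum_comp_ite_mem_ite_mem hst x y (fun v => v) rfl]
  simp only [nsmul_eq_mul, add_dotProduct, Nat.cast_smul_eq_nsmul]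

lemma Matrix.PosDef.blockVec_quadForm_pos [Fintype κ] {r : ℕ} {C B : Matrix κ κ ℝ}
    (hN : ((1 : Matrix (Fin r) (Fin r) ℝ) ⊗ₖ C + allOnes r ⊗ₖ B).PosDef) {s t : Finset (Fin r)}
    (hst : Disjoint s t) (hs : s.Nonempty) {x : κ → ℝ} (hx : x ≠ 0) (y : κ → ℝ) :
    0 < #s * (x ⬝ᵥ C *ᵥ x) + #t * (y ⬝ᵥ C *ᵥ y)
        + ((#s : ℝ) • x + (#t : ℝ) • y) ⬝ᵥ B *ᵥ ((#s : ℝ) • x + (#t : ℝ) • y) := by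
  simpa [blockVec_dotProduct_mulVec C B hst] using
    hN.dotProduct_mulVec_pos (blockVec_ne_zero hs t hx y)

end BlockVec

section PosDefKronecker

variable {r n : ℕ} {A B : Matrix (Fin n) (Fin n) ℝ}

lemma posDef_sub_of_posDef_kronecker (hr : 2 ≤ r) (hA : A.IsSymm) (hB : B.IsSymm)
    (hN : ((1 : Matrix (Fin r) (Fin r) ℝ) ⊗ₖ (A - B) + allOnes r ⊗ₖ B).PosDef) :
    (A - B).PosDef := by
  refine .of_dotProduct_mulVec_pos (isHermitian_iff_isSymm.2 (hA.sub hB)) fun x hx => ?_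
  obtain ⟨i, j, hij⟩ := (Fin.nontrivial_iff_two_le.2 hr).exists_pair_ne
  have h := hN.blockVec_quadForm_pos (disjoint_singleton.2 hij) (singleton_nonempty i) hx (-x)
  simp only [card_singleton, Nat.cast_one, one_mul, one_smul, add_neg_cancel, mulVec_neg,
    dotProduct_neg, neg_dotProduct, neg_neg, zero_dotProduct, add_zero] at h
  rw [star_trivial]
  linarith

lemma posDef_add_smul_of_posDef_kronecker (hA : A.IsSymm) (hB : B.IsSymm)
    (hN : ((1 : Matrix (Fin r) (Fin r) ℝ) ⊗ₖ (A - B) + allOnes r ⊗ₖ B).PosDef) {l : ℕ}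
    (hl : l + 1 ≤ r) : (A + (l : ℝ) • B).PosDef := by
  refine .of_dotProduct_mulVec_pos
    (isHermitian_iff_isSymm.2 (hA.add (hB.smul _))) fun x hx => ?_
  obtain ⟨s, -, hs⟩ := exists_subset_card_eq (s := (univ : Finset (Fin r))) (n := l + 1)
    (by rwa [card_univ, Fintype.card_fin])
  have h := hN.blockVec_quadForm_pos (disjoint_empty_right s) (card_pos.1 (by omega)) hx 0
  simp only [hs, card_empty, Nat.cast_add, Nat.cast_one, Nat.cast_zero, zero_mul, add_zero,
    zero_smul] at h
  simp only [star_trivial, add_mulVec, sub_mulVec, smul_mulVec, mulVec_smul, dotProduct_add,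
    smul_dotProduct, dotProduct_sub, dotProduct_smul, smul_eq_mul] at h ⊢
  refine pos_of_mul_pos_right (a := (l : ℝ) + 1) ?_ (by positivity)
  linarith

lemma posDef_sub_smul_mul_inv_mul_of_posDef_kronecker (hA : A.IsSymm) (hB : B.IsSymm)
    (hN : ((1 : Matrix (Fin r) (Fin r) ℝ) ⊗ₖ (A - B) + allOnes r ⊗ₖ B).PosDef) {l : ℕ}
    (hl₁ : 1 ≤ l) (hl : l + 1 ≤ r) :
    (A - (l : ℝ) • (B * (A + ((l : ℝ) - 1) • B)⁻¹ * B)).PosDef := by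
  set M := A + ((l : ℝ) - 1) • B
  have hM : M.PosDef := by
    simpa [M, Nat.cast_sub hl₁] using
      posDef_add_smul_of_posDef_kronecker hA hB hN (l := l - 1) (by omega)
  have hBMB : (B * M⁻¹ * B).IsHermitian := by
    simpa only [(isHermitian_iff_isSymm.2 hB).eq] using
      isHermitian_mul_mul_conjTranspose B hM.isHermitian.inv
  refine .of_dotProduct_mulVec_pos
    ((isHermitian_iff_isSymm.2 hA).sub (hBMB.smul rfl)) fun x hx => ?_
  obtain ⟨s, -, hs⟩ := exists_subset_card_eq (s := (univ : Finset (Fin r))) (n := l + 1)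
    (by rwa [card_univ, Fintype.card_fin])
  obtain ⟨i, hi⟩ : s.Nonempty := card_pos.1 (by omega)
  set y := -(M⁻¹ *ᵥ (B *ᵥ x))
  have h := hN.blockVec_quadForm_pos (disjoint_singleton_left.2 (s.notMem_erase i))
    (singleton_nonempty i) hx y
  rw [card_singleton, card_erase_of_mem hi, hs, Nat.add_sub_cancel] at h
  have hMy : M *ᵥ y = -(B *ᵥ x) := by
    rw [mulVec_neg, mulVec_mulVec, mul_nonsing_inv _ ((isUnit_iff_isUnit_det M).1 hM.isUnit),
      one_mulVec]
  have hyMy : y ⬝ᵥ M *ᵥ y = -(y ⬝ᵥ B *ᵥ x) := by rw [hMy, dotProduct_neg]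
  have hxBy : x ⬝ᵥ B *ᵥ y = -(x ⬝ᵥ (B * M⁻¹ * B) *ᵥ x) := by
    rw [mulVec_neg, mulVec_mulVec, mulVec_mulVec, Matrix.mul_assoc, dotProduct_neg]
  simp only [M, star_trivial, add_mulVec, sub_mulVec, smul_mulVec, mulVec_smul, mulVec_add,
    dotProduct_add, add_dotProduct, dotProduct_sub, dotProduct_smul, smul_dotProduct,
    smul_eq_mul, Nat.cast_one, one_mul] at h hyMy hxBy ⊢
  linear_combination h + (l : ℝ) * hyMy + (l : ℝ) * hxBy

end PosDefKronecker

theorem stmt_5 {n : ℕ} (r : ℕ) (hr : 2 ≤ r) (A B : Matrix (Fin n) (Fin n) ℝ)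
    (hA : A.IsSymm) (hB : B.IsSymm)
    (hN : ((1 : Matrix (Fin r) (Fin r) ℝ) ⊗ₖ (A - B) + allOnes r ⊗ₖ B).PosDef) :
    (A - B).PosDef
    ∧ (∀ l : ℕ, 1 ≤ l → l ≤ r - 1 → (A + (l : ℝ) • B).PosDef)
    ∧ (∀ l : ℕ, 1 ≤ l → l ≤ r - 1 →
        (A - (l : ℝ) • (B * (A + ((l : ℝ) - 1) • B)⁻¹ * B)).PosDef) :=
  ⟨posDef_sub_of_posDef_kronecker hr hA hB hN,
    fun _ _ hl => posDef_add_smul_of_posDef_kronecker hA hB hN (by omega),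
    fun _ hl₁ hl => posDef_sub_smul_mul_inv_mul_of_posDef_kronecker hA hB hN hl₁ (by omega)⟩
end

section
/- Let A and B be symmetric real n×n matrices and r ≥ 2 an integer such that A − B, A + (r−2)·B, A + (r−1)·B, and A − (r−1)·B·(A + (r−2)·B)⁻¹·B are all invertible. Set F = (A − (r−1)·B·(A + (r−2)·B)⁻¹·B)⁻¹ and G = (A + (r−1)·B)⁻¹·B·(A − B)⁻¹. Then the matrix N_r = I_r ⊗ (A − B) + J_r ⊗ B is invertible and N_r⁻¹ = I_r ⊗ (F + G) − J_r ⊗ G, where J_r denotes the r×r all-ones matrix and ⊗ the Kronecker product. -/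
/-
With `E = A - B` and `D = A + (r - 1) B`, the matrix `N_r = I ⊗ E + J ⊗ B` has inverse
`I ⊗ E⁻¹ - J ⊗ G` for `G = D⁻¹ B E⁻¹`: multiplying out and using `J² = r J` leaves
`J ⊗ ((E + r B) G - B E⁻¹) = 0`, and `E + r B = D`. It remains to see `F + G = E⁻¹`, which
follows from the factorisation `A - (r - 1) B C⁻¹ B = E C⁻¹ D` with `C = A + (r - 2) B`,
so that `F = D⁻¹ C E⁻¹` and `F + G = D⁻¹ (C + B) E⁻¹ = E⁻¹`.
-/

open Matrix
open scoped Kronecker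

lemma allOnes_mul_allOnes (r : ℕ) : allOnes r * allOnes r = (r : ℝ) • allOnes r := by
  ext i j
  simp [allOnes, Matrix.mul_apply]

namespace Matrix

variable {ι m K : Type*} [Fintype ι] [DecidableEq ι] [Fintype m] [DecidableEq m] [CommRing K]

lemma one_kronecker_add_kronecker_mul_sub_kronecker_eq_one {J : Matrix ι ι K} {c : K}
    (hJ : J * J = c • J) {E : Matrix m m K} (B : Matrix m m K) (hE : IsUnit E.det)
    (hD : IsUnit (E + c • B).det) :
    (1 ⊗ₖ E + J ⊗ₖ B) * (1 ⊗ₖ E⁻¹ - J ⊗ₖ ((E + c • B)⁻¹ * B * E⁻¹)) = 1 := by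
  have hG : E * ((E + c • B)⁻¹ * B * E⁻¹) + c • (B * ((E + c • B)⁻¹ * B * E⁻¹)) = B * E⁻¹ := by
    rw [← smul_mul_assoc, ← add_mul, ← mul_assoc, ← mul_assoc, mul_nonsing_inv _ hD, one_mul]
  simp only [add_mul, mul_sub, ← mul_kronecker_mul, one_mul, mul_one, hJ, mul_nonsing_inv _ hE,
    smul_kronecker, ← kronecker_smul, one_kronecker_one]
  rw [← hG, kronecker_add]
  abel

lemma sub_mul_inv_mul_add_smul_eq {A B : Matrix m m K} (t : K)
    (hC : IsUnit (A + (t - 1) • B).det) :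
    (A - B) * (A + (t - 1) • B)⁻¹ * (A + t • B) = A - t • (B * (A + (t - 1) • B)⁻¹ * B) := by
  set C := A + (t - 1) • B
  have hAB : A - B = C - t • B := by simp only [C]; module
  have hAtB : A + t • B = C + B := by simp only [C]; module
  rw [hAB, hAtB, sub_mul, mul_nonsing_inv _ hC, smul_mul_assoc, sub_mul, one_mul, mul_add]
  simp only [smul_mul_assoc, mul_assoc, nonsing_inv_mul _ hC, mul_one, C]
  module

lemma inv_sub_smul_mul_inv_mul_add_eq_inv {A B : Matrix m m K} (t : K)
    (hC : IsUnit (A + (t - 1) • B).det) (hD : IsUnit (A + t • B).det) :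
    (A - t • (B * (A + (t - 1) • B)⁻¹ * B))⁻¹ + (A + t • B)⁻¹ * B * (A - B)⁻¹ = (A - B)⁻¹ := by
  have hCB : A + (t - 1) • B + B = A + t • B := by module
  rw [← sub_mul_inv_mul_add_smul_eq t hC, mul_inv_rev, mul_inv_rev, nonsing_inv_nonsing_inv _ hC,
    ← mul_assoc, ← add_mul, ← mul_add, hCB, nonsing_inv_mul _ hD, one_mul]

end Matrix

theorem stmt_6_general {n : ℕ} (r : ℕ) (A B : Matrix (Fin n) (Fin n) ℝ)
    (h1 : IsUnit (A - B).det)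
    (h2 : IsUnit (A + ((r : ℝ) - 2) • B).det)
    (h3 : IsUnit (A + ((r : ℝ) - 1) • B).det) :
    IsUnit ((1 : Matrix (Fin r) (Fin r) ℝ) ⊗ₖ (A - B) + allOnes r ⊗ₖ B).det
    ∧ ((1 : Matrix (Fin r) (Fin r) ℝ) ⊗ₖ (A - B) + allOnes r ⊗ₖ B)⁻¹
        = (1 : Matrix (Fin r) (Fin r) ℝ) ⊗ₖ
            ((A - ((r : ℝ) - 1) • (B * (A + ((r : ℝ) - 2) • B)⁻¹ * B))⁻¹
              + (A + ((r : ℝ) - 1) • B)⁻¹ * B * (A - B)⁻¹)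
          - allOnes r ⊗ₖ ((A + ((r : ℝ) - 1) • B)⁻¹ * B * (A - B)⁻¹) := by
  have hD : A + ((r : ℝ) - 1) • B = (A - B) + (r : ℝ) • B := by module
  have hr2 : (r : ℝ) - 2 = (r : ℝ) - 1 - 1 := by ring
  rw [hr2, inv_sub_smul_mul_inv_mul_add_eq_inv _ (hr2 ▸ h2) h3, hD]
  rw [hD] at h3
  have hNM := one_kronecker_add_kronecker_mul_sub_kronecker_eq_one (allOnes_mul_allOnes r) B h1 h3
  exact ⟨isUnit_det_of_right_inverse hNM, inv_eq_right_inv hNM⟩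

theorem stmt_6 {n : ℕ} (r : ℕ) (hr : 2 ≤ r) (A B : Matrix (Fin n) (Fin n) ℝ)
    (hA : A.IsSymm) (hB : B.IsSymm)
    (h1 : IsUnit (A - B).det)
    (h2 : IsUnit (A + ((r : ℝ) - 2) • B).det)
    (h3 : IsUnit (A + ((r : ℝ) - 1) • B).det)
    (h4 : IsUnit (A - ((r : ℝ) - 1) • (B * (A + ((r : ℝ) - 2) • B)⁻¹ * B)).det) :
    IsUnit ((1 : Matrix (Fin r) (Fin r) ℝ) ⊗ₖ (A - B) + allOnes r ⊗ₖ B).det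
    ∧ ((1 : Matrix (Fin r) (Fin r) ℝ) ⊗ₖ (A - B) + allOnes r ⊗ₖ B)⁻¹
        = (1 : Matrix (Fin r) (Fin r) ℝ) ⊗ₖ
            ((A - ((r : ℝ) - 1) • (B * (A + ((r : ℝ) - 2) • B)⁻¹ * B))⁻¹
              + (A + ((r : ℝ) - 1) • B)⁻¹ * B * (A - B)⁻¹)
          - allOnes r ⊗ₖ ((A + ((r : ℝ) - 1) • B)⁻¹ * B * (A - B)⁻¹) :=
  stmt_6_general r A B h1 h2 h3
end

section
/- Let A and B be symmetric real n×n matrices and r ≥ 2 an integer such that A − B, A + (r−2)·B, A + (r−1)·B, and A − (r−1)·B·(A + (r−2)·B)⁻¹·B are all invertible. Set F = (A − (r−1)·B·(A + (r−2)·B)⁻¹·B)⁻¹ and G = (A + (r−1)·B)⁻¹·B·(A − B)⁻¹. Then F + G = (A − B)⁻¹ and F − (r−1)·G = (A + (r−1)·B)⁻¹. -/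
/-!
Put `s = r - 1` and `M = A + (r - 2) • B`. Then `A - B = M - s • B` and `A + s • B = M + B`, so
`A - s • B M⁻¹ B = (A - B) M⁻¹ (A + s • B)` and `F = (A + s • B)⁻¹ M (A - B)⁻¹`. Hence
`F + G = (A + s • B)⁻¹ (M + B) (A - B)⁻¹ = (A - B)⁻¹` and
`F - s • G = (A + s • B)⁻¹ (M - s • B) (A - B)⁻¹ = (A + s • B)⁻¹`.
-/

open Matrix

namespace Matrix

variable {m R : Type*} [Fintype m] [DecidableEq m] [CommRing R]

theorem sub_mul_nonsing_inv_mul_add {M : Matrix m m R} (hM : IsUnit M.det) (C D : Matrix m m R) :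
    (M - C) * M⁻¹ * (M + D) = M + D - C - C * M⁻¹ * D := by
  have hMM : M * M⁻¹ = 1 := mul_nonsing_inv M hM
  have hMM' : M⁻¹ * M = 1 := nonsing_inv_mul M hM
  calc (M - C) * M⁻¹ * (M + D)
      = M * M⁻¹ * M + M * M⁻¹ * D - C * (M⁻¹ * M) - C * M⁻¹ * D := by noncomm_ring
    _ = M + D - C - C * M⁻¹ * D := by rw [hMM, hMM', one_mul, one_mul, mul_one]

theorem nonsing_inv_mul_nonsing_inv_mul (P : Matrix m m R) {M : Matrix m m R} (hM : IsUnit M.det)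
    (Q : Matrix m m R) :
    (P * M⁻¹ * Q)⁻¹ = Q⁻¹ * M * P⁻¹ := by
  rw [mul_inv_rev, mul_inv_rev, nonsing_inv_nonsing_inv M hM, mul_assoc]

theorem nonsing_inv_sub_smul_mul_nonsing_inv_mul {A B : Matrix m m R} {s : R}
    (hM : IsUnit (A + (s - 1) • B).det) :
    (A - s • (B * (A + (s - 1) • B)⁻¹ * B))⁻¹
      = (A + s • B)⁻¹ * (A + (s - 1) • B) * (A - B)⁻¹ := by
  set M := A + (s - 1) • B with hMdef
  have hPM : A - B = M - s • B := by rw [hMdef]; module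
  have hQM : A + s • B = M + B := by rw [hMdef]; module
  have hfactor : A - s • (B * M⁻¹ * B) = (A - B) * M⁻¹ * (A + s • B) := by
    rw [hPM, hQM, sub_mul_nonsing_inv_mul_add hM, smul_mul_assoc, smul_mul_assoc, hMdef]
    module
  rw [hfactor, nonsing_inv_mul_nonsing_inv_mul _ hM _]

end Matrix

theorem stmt_7_general {n : ℕ} (r : ℕ) (A B : Matrix (Fin n) (Fin n) ℝ)
    (h1 : IsUnit (A - B).det)
    (h2 : IsUnit (A + ((r : ℝ) - 2) • B).det)
    (h3 : IsUnit (A + ((r : ℝ) - 1) • B).det)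
    (F G : Matrix (Fin n) (Fin n) ℝ)
    (hF : F = (A - ((r : ℝ) - 1) • (B * (A + ((r : ℝ) - 2) • B)⁻¹ * B))⁻¹)
    (hG : G = (A + ((r : ℝ) - 1) • B)⁻¹ * B * (A - B)⁻¹) :
    F + G = (A - B)⁻¹ ∧ F - ((r : ℝ) - 1) • G = (A + ((r : ℝ) - 1) • B)⁻¹ := by
  set s : ℝ := (r : ℝ) - 1
  have hr : (r : ℝ) - 2 = s - 1 := by ring
  rw [hr] at h2 hF
  set Q := A + s • B
  set M := A + (s - 1) • B
  have hMQ : M + B = Q := by module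
  have hMP : M - s • B = A - B := by module
  rw [nonsing_inv_sub_smul_mul_nonsing_inv_mul h2] at hF
  subst hF hG
  constructor
  · calc Q⁻¹ * M * (A - B)⁻¹ + Q⁻¹ * B * (A - B)⁻¹ = Q⁻¹ * (M + B) * (A - B)⁻¹ := by noncomm_ring
      _ = (A - B)⁻¹ := by rw [hMQ, nonsing_inv_mul Q h3, one_mul]
  · calc Q⁻¹ * M * (A - B)⁻¹ - s • (Q⁻¹ * B * (A - B)⁻¹) = Q⁻¹ * (M - s • B) * (A - B)⁻¹ := by
          noncomm_ring
      _ = Q⁻¹ := by rw [hMP, mul_assoc, mul_nonsing_inv _ h1, mul_one]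

theorem stmt_7 {n : ℕ} (r : ℕ) (hr : 2 ≤ r) (A B : Matrix (Fin n) (Fin n) ℝ)
    (hA : A.IsSymm) (hB : B.IsSymm)
    (h1 : IsUnit (A - B).det)
    (h2 : IsUnit (A + ((r : ℝ) - 2) • B).det)
    (h3 : IsUnit (A + ((r : ℝ) - 1) • B).det)
    (h4 : IsUnit (A - ((r : ℝ) - 1) • (B * (A + ((r : ℝ) - 2) • B)⁻¹ * B)).det)
    (F G : Matrix (Fin n) (Fin n) ℝ)
    (hF : F = (A - ((r : ℝ) - 1) • (B * (A + ((r : ℝ) - 2) • B)⁻¹ * B))⁻¹)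
    (hG : G = (A + ((r : ℝ) - 1) • B)⁻¹ * B * (A - B)⁻¹) :
    F + G = (A - B)⁻¹ ∧ F - ((r : ℝ) - 1) • G = (A + ((r : ℝ) - 1) • B)⁻¹ :=
  stmt_7_general r A B h1 h2 h3 F G hF hG
end

section
/- Let r ≥ 2 be an integer, let A and B be symmetric real n×n matrices, and let 𝐀 = I_r ⊗ (A − B) + J_r ⊗ B be Schur stable. Let 𝐐 be a symmetric positive definite rn×rn real matrix and let 𝐏 be a symmetric matrix satisfying the discrete Lyapunov equation 𝐏 = 𝐀ᵀ𝐏𝐀 + 𝐐. Then there exist symmetric n×n matrices P₁, P₂ with 𝐏 = I_r ⊗ (P₁ − P₂) + J_r ⊗ P₂ if and only if there exist symmetric n×n matrices Q₁, Q₂ with 𝐐 = I_r ⊗ (Q₁ − Q₂) + J_r ⊗ Q₂. -/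
/-!
For symmetric Schur-stable `𝐀` the Lyapunov equation `P = 𝐀ᵀ P 𝐀 + Q` has at most one
solution: the difference `X` of two solutions satisfies `X = 𝐀 X 𝐀`, which in an orthonormal
eigenbasis of `𝐀` reads `Xᵢⱼ = dᵢ dⱼ Xᵢⱼ` with `|dᵢ dⱼ| < 1`.

For `r ≥ 2` the matrices `I ⊗ (D - O) + J ⊗ O` are exactly those invariant under simultaneous
permutations of the `r` block indices. `𝐀` is one of them, so if `P` is, then so is
`Q = P - 𝐀ᵀ P 𝐀`. Conversely, if `Q` is, then every block permutation of `P` solves the same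
equation as `P`, hence equals `P` by uniqueness; likewise `Pᵀ = P`. Symmetry of the blocks is
read off from symmetry of the whole matrix.
-/

open Matrix
open scoped Kronecker

/-- A real square matrix is Schur stable if all of its complex eigenvalues have
modulus strictly less than one. -/
def SchurStable {N : Type*} [Fintype N] [DecidableEq N] (M : Matrix N N ℝ) : Prop :=
  ∀ μ ∈ spectrum ℂ (M.map (algebraMap ℝ ℂ)), ‖μ‖ < 1

section SteinEquation

variable {N : Type*} [Fintype N] [DecidableEq N]

theorem SchurStable.abs_eigenvalues_lt_one {M : Matrix N N ℝ} (hstab : SchurStable M)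
    (hM : M.IsHermitian) (i : N) : |hM.eigenvalues i| < 1 := by
  have hroot : M.charpoly.IsRoot (hM.eigenvalues i) :=
    Matrix.mem_spectrum_iff_isRoot_charpoly.1 (hM.eigenvalues_mem_spectrum_real i)
  have hmem : ((hM.eigenvalues i : ℝ) : ℂ) ∈ spectrum ℂ (M.map (algebraMap ℝ ℂ)) := by
    apply Matrix.mem_spectrum_of_isRoot_charpoly
    rw [Matrix.charpoly_map]
    exact hroot.map
  simpa using hstab _ hmem

theorem Matrix.eq_zero_of_eq_diagonal_mul_mul_diagonal {K : Type*} [Field K] {d : N → K}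
    (hd : ∀ i j, d i * d j ≠ 1) {Y : Matrix N N K}
    (hY : Y = diagonal d * Y * diagonal d) : Y = 0 := by
  ext i j
  have hij : Y i j * (1 - d i * d j) = 0 := by
    have := congrFun₂ hY i j
    simp only [mul_diagonal, diagonal_mul] at this
    linear_combination this
  simpa [sub_ne_zero.2 (hd i j).symm] using hij

theorem SchurStable.eq_zero_of_eq_mul_mul {M : Matrix N N ℝ} (hstab : SchurStable M)
    (hM : M.IsHermitian) {X : Matrix N N ℝ} (hX : X = M * X * M) : X = 0 := by
  set U : Matrix N N ℝ := (hM.eigenvectorUnitary : Matrix N N ℝ)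
  have hU₁ : star U * U = 1 := mem_unitaryGroup_iff'.1 hM.eigenvectorUnitary.2
  have hU₂ : U * star U = 1 := mem_unitaryGroup_iff.1 hM.eigenvectorUnitary.2
  have hU₁' (Z : Matrix N N ℝ) : star U * (U * Z) = Z := by
    rw [← Matrix.mul_assoc, hU₁, Matrix.one_mul]
  have hU₂' (Z : Matrix N N ℝ) : U * (star U * Z) = Z := by
    rw [← Matrix.mul_assoc, hU₂, Matrix.one_mul]
  have hspec : M = U * diagonal hM.eigenvalues * star U := by
    simpa [Unitary.conjStarAlgAut_apply] using hM.spectral_theorem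
  have hd : ∀ i j, hM.eigenvalues i * hM.eigenvalues j ≠ 1 := fun i j h => by
    have := mul_lt_one_of_nonneg_of_lt_one_left (abs_nonneg _)
      (hstab.abs_eigenvalues_lt_one hM i) (hstab.abs_eigenvalues_lt_one hM j).le
    rw [← abs_mul, h, abs_one] at this
    exact lt_irrefl _ this
  have hY : star U * X * U = 0 := by
    apply eq_zero_of_eq_diagonal_mul_mul_diagonal hd
    conv_lhs => rw [hX, hspec]
    simp only [Matrix.mul_assoc, hU₁, hU₁', Matrix.mul_one]
  calc X = U * (star U * X * U) * star U := by
        simp only [Matrix.mul_assoc, hU₂, hU₂', Matrix.mul_one]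
    _ = 0 := by rw [hY, Matrix.mul_zero, Matrix.zero_mul]

theorem SchurStable.eq_of_lyapunov {M : Matrix N N ℝ} (hstab : SchurStable M) (hM : M.IsSymm)
    {X Y Q : Matrix N N ℝ} (hX : X = Mᵀ * X * M + Q) (hY : Y = Mᵀ * Y * M + Q) : X = Y := by
  have hMh : M.IsHermitian := by rwa [IsHermitian, conjTranspose_eq_transpose_of_trivial]
  rw [← sub_eq_zero]
  apply hstab.eq_zero_of_eq_mul_mul hMh
  conv_lhs => rw [hX, hY]
  rw [hM.eq]
  simp only [Matrix.mul_sub, Matrix.sub_mul]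
  abel

end SteinEquation

section BlockPermInvariant

variable {ι m α : Type*}

def BlockPermInvariant (M : Matrix (ι × m) (ι × m) α) : Prop :=
  ∀ σ : Equiv.Perm ι,
    M.submatrix (σ.prodCongr (Equiv.refl m)) (σ.prodCongr (Equiv.refl m)) = M

variable {M N : Matrix (ι × m) (ι × m) α}

theorem BlockPermInvariant.mul [Fintype ι] [Fintype m] [NonUnitalNonAssocSemiring α]
    (hM : BlockPermInvariant M) (hN : BlockPermInvariant N) : BlockPermInvariant (M * N) :=
  fun σ => by rw [← submatrix_mul_equiv M N _ (σ.prodCongr (Equiv.refl m)) _, hM σ, hN σ]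

theorem BlockPermInvariant.sub [Sub α] (hM : BlockPermInvariant M)
    (hN : BlockPermInvariant N) : BlockPermInvariant (M - N) := fun σ =>
  congrArg₂ (· - ·) (hM σ) (hN σ)

theorem BlockPermInvariant.transpose (hM : BlockPermInvariant M) : BlockPermInvariant Mᵀ :=
  fun σ => by rw [← transpose_submatrix, hM σ]

end BlockPermInvariant

theorem Equiv.Perm.exists_apply_eq_and_apply_eq {α : Type*} [DecidableEq α] {a b c d : α}
    (hab : a ≠ b) (hcd : c ≠ d) : ∃ σ : Equiv.Perm α, σ a = c ∧ σ b = d := by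
  set τ := Equiv.swap a c
  have hτ : τ (τ d) = d := Equiv.swap_apply_self _ _ _
  have hτd : τ d ≠ a := fun h => hcd (by rw [← hτ, h, Equiv.swap_apply_left])
  refine ⟨τ * Equiv.swap b (τ d), ?_, ?_⟩
  · rw [Equiv.Perm.mul_apply, Equiv.swap_apply_of_ne_of_ne hab hτd.symm, Equiv.swap_apply_left]
  · rw [Equiv.Perm.mul_apply, Equiv.swap_apply_left, hτ]

section ExchangeableBlock

variable {m : Type*} {r : ℕ}

def exchangeableBlock (r : ℕ) (D O : Matrix m m ℝ) : Matrix (Fin r × m) (Fin r × m) ℝ :=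
  (1 : Matrix (Fin r) (Fin r) ℝ) ⊗ₖ (D - O) + allOnes r ⊗ₖ O

theorem exchangeableBlock_apply (D O : Matrix m m ℝ) (p q : Fin r × m) :
    exchangeableBlock r D O p q = if p.1 = q.1 then D p.2 q.2 else O p.2 q.2 := by
  by_cases h : p.1 = q.1 <;> simp [exchangeableBlock, allOnes, one_apply, h]

theorem blockPermInvariant_exchangeableBlock (D O : Matrix m m ℝ) :
    BlockPermInvariant (exchangeableBlock r D O) := fun σ => by
  ext p q
  simp [exchangeableBlock_apply, σ.injective.eq_iff]

theorem BlockPermInvariant.exists_eq_exchangeableBlock (hr : 2 ≤ r)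
    {M : Matrix (Fin r × m) (Fin r × m) ℝ} (hM : BlockPermInvariant M) :
    ∃ D O : Matrix m m ℝ, M = exchangeableBlock r D O := by
  let i₀ : Fin r := ⟨0, by omega⟩
  let i₁ : Fin r := ⟨1, by omega⟩
  have h₀₁ : i₀ ≠ i₁ := by simp [i₀, i₁, Fin.ext_iff]
  refine ⟨of fun a b => M (i₀, a) (i₀, b), of fun a b => M (i₀, a) (i₁, b), ?_⟩
  ext ⟨i, a⟩ ⟨j, b⟩
  rw [exchangeableBlock_apply]
  split_ifs with hij
  · subst hij
    simpa using congrFun₂ (hM (Equiv.swap i₀ i)) (i₀, a) (i₀, b)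
  · obtain ⟨σ, hσ₀, hσ₁⟩ := Equiv.Perm.exists_apply_eq_and_apply_eq h₀₁ hij
    simpa [hσ₀, hσ₁] using congrFun₂ (hM σ) (i₀, a) (i₁, b)

theorem isSymm_exchangeableBlock {D O : Matrix m m ℝ} (hD : D.IsSymm) (hO : O.IsSymm) :
    (exchangeableBlock r D O).IsSymm :=
  IsSymm.ext fun p q => by
    simp only [exchangeableBlock_apply, eq_comm (a := q.1), hD.apply, hO.apply]

theorem isSymm_exchangeableBlock_iff (hr : 2 ≤ r) {D O : Matrix m m ℝ} :
    (exchangeableBlock r D O).IsSymm ↔ D.IsSymm ∧ O.IsSymm := by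
  refine ⟨fun h => ?_, fun h => isSymm_exchangeableBlock h.1 h.2⟩
  let i₀ : Fin r := ⟨0, by omega⟩
  let i₁ : Fin r := ⟨1, by omega⟩
  have h₀₁ : i₀ ≠ i₁ := by simp [i₀, i₁, Fin.ext_iff]
  constructor <;> refine IsSymm.ext fun a b => ?_
  · simpa [exchangeableBlock_apply] using h.apply (i₀, a) (i₀, b)
  · simpa [exchangeableBlock_apply, h₀₁, h₀₁.symm] using h.apply (i₀, a) (i₁, b)

end ExchangeableBlock

section Lyapunov

variable {N α : Type*} [Fintype N] {A X Q : Matrix N N α}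

theorem Matrix.IsSymm.transpose_mul_mul [CommSemiring α] (hX : X.IsSymm) (A : Matrix N N α) :
    (Aᵀ * X * A).IsSymm := by
  simp only [IsSymm, transpose_mul, transpose_transpose, hX.eq, Matrix.mul_assoc]

theorem lyapunov_transpose [CommSemiring α] (hQ : Q.IsSymm) (hX : X = Aᵀ * X * A + Q) :
    Xᵀ = Aᵀ * Xᵀ * A + Q := by
  conv_lhs => rw [hX]
  rw [transpose_add, hQ.eq, transpose_mul, transpose_mul, transpose_transpose, Matrix.mul_assoc]

theorem lyapunov_submatrix [NonUnitalNonAssocSemiring α] (e : N ≃ N)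
    (hA : A.submatrix e e = A) (hQ : Q.submatrix e e = Q)
    (hX : X = Aᵀ * X * A + Q) : X.submatrix e e = Aᵀ * X.submatrix e e * A + Q := by
  conv_lhs => rw [hX]
  change (Aᵀ * X * A).submatrix e e + Q.submatrix e e = _
  rw [hQ, ← submatrix_mul_equiv _ A _ e _, ← submatrix_mul_equiv Aᵀ X _ e _,
    ← transpose_submatrix, hA]

end Lyapunov

theorem stmt_9_general {n : ℕ} (r : ℕ) (hr : 2 ≤ r)
    (A B : Matrix (Fin n) (Fin n) ℝ) (hA : A.IsSymm) (hB : B.IsSymm)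
    (hstab : SchurStable ((1 : Matrix (Fin r) (Fin r) ℝ) ⊗ₖ (A - B) + allOnes r ⊗ₖ B))
    (Q P : Matrix (Fin r × Fin n) (Fin r × Fin n) ℝ)
    (hLyap : P = ((1 : Matrix (Fin r) (Fin r) ℝ) ⊗ₖ (A - B) + allOnes r ⊗ₖ B)ᵀ * P
        * ((1 : Matrix (Fin r) (Fin r) ℝ) ⊗ₖ (A - B) + allOnes r ⊗ₖ B) + Q) :
    (∃ P₁ P₂ : Matrix (Fin n) (Fin n) ℝ, P₁.IsSymm ∧ P₂.IsSymm ∧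
        P = (1 : Matrix (Fin r) (Fin r) ℝ) ⊗ₖ (P₁ - P₂) + allOnes r ⊗ₖ P₂)
    ↔ (∃ Q₁ Q₂ : Matrix (Fin n) (Fin n) ℝ, Q₁.IsSymm ∧ Q₂.IsSymm ∧
        Q = (1 : Matrix (Fin r) (Fin r) ℝ) ⊗ₖ (Q₁ - Q₂) + allOnes r ⊗ₖ Q₂) := by
  change SchurStable (exchangeableBlock r A B) at hstab
  change P = (exchangeableBlock r A B)ᵀ * P * exchangeableBlock r A B + Q at hLyap
  have hsymm := isSymm_exchangeableBlock (r := r) hA hB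
  have hinv := blockPermInvariant_exchangeableBlock (r := r) A B
  constructor
  · rintro ⟨P₁, P₂, hP₁, hP₂, rfl⟩
    have hQ : Q = exchangeableBlock r P₁ P₂
        - (exchangeableBlock r A B)ᵀ * exchangeableBlock r P₁ P₂ * exchangeableBlock r A B :=
      eq_sub_of_add_eq' hLyap.symm
    have hPsymm := isSymm_exchangeableBlock (r := r) hP₁ hP₂
    have hPinv := blockPermInvariant_exchangeableBlock (r := r) P₁ P₂
    have hQsymm : Q.IsSymm := hQ ▸ hPsymm.sub (hPsymm.transpose_mul_mul _)
    have hQinv : BlockPermInvariant Q := hQ ▸ hPinv.sub ((hinv.transpose.mul hPinv).mul hinv)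
    obtain ⟨Q₁, Q₂, rfl⟩ := hQinv.exists_eq_exchangeableBlock hr
    obtain ⟨hQ₁, hQ₂⟩ := (isSymm_exchangeableBlock_iff hr).1 hQsymm
    exact ⟨Q₁, Q₂, hQ₁, hQ₂, rfl⟩
  · rintro ⟨Q₁, Q₂, hQ₁, hQ₂, rfl⟩
    have hPsymm : P.IsSymm := hstab.eq_of_lyapunov hsymm
      (lyapunov_transpose (isSymm_exchangeableBlock hQ₁ hQ₂) hLyap) hLyap
    have hQinv := blockPermInvariant_exchangeableBlock (r := r) Q₁ Q₂
    have hPinv : BlockPermInvariant P := fun σ =>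
      hstab.eq_of_lyapunov hsymm (lyapunov_submatrix _ (hinv σ) (hQinv σ) hLyap) hLyap
    obtain ⟨P₁, P₂, rfl⟩ := hPinv.exists_eq_exchangeableBlock hr
    obtain ⟨hP₁, hP₂⟩ := (isSymm_exchangeableBlock_iff hr).1 hPsymm
    exact ⟨P₁, P₂, hP₁, hP₂, rfl⟩

theorem stmt_9 {n : ℕ} (r : ℕ) (hr : 2 ≤ r)
    (A B : Matrix (Fin n) (Fin n) ℝ) (hA : A.IsSymm) (hB : B.IsSymm)
    (hstab : SchurStable ((1 : Matrix (Fin r) (Fin r) ℝ) ⊗ₖ (A - B) + allOnes r ⊗ₖ B))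
    (Q P : Matrix (Fin r × Fin n) (Fin r × Fin n) ℝ)
    (hQ : Q.PosDef) (hP : P.IsSymm)
    (hLyap : P = ((1 : Matrix (Fin r) (Fin r) ℝ) ⊗ₖ (A - B) + allOnes r ⊗ₖ B)ᵀ * P
        * ((1 : Matrix (Fin r) (Fin r) ℝ) ⊗ₖ (A - B) + allOnes r ⊗ₖ B) + Q) :
    (∃ P₁ P₂ : Matrix (Fin n) (Fin n) ℝ, P₁.IsSymm ∧ P₂.IsSymm ∧
        P = (1 : Matrix (Fin r) (Fin r) ℝ) ⊗ₖ (P₁ - P₂) + allOnes r ⊗ₖ P₂)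
    ↔ (∃ Q₁ Q₂ : Matrix (Fin n) (Fin n) ℝ, Q₁.IsSymm ∧ Q₂.IsSymm ∧
        Q = (1 : Matrix (Fin r) (Fin r) ℝ) ⊗ₖ (Q₁ - Q₂) + allOnes r ⊗ₖ Q₂) :=
  stmt_9_general r hr A B hA hB hstab Q P hLyap
end

section
/- Let A be a real n×n matrix, B a real n×m matrix, K, L real m×n matrices, Q̃ a symmetric positive definite n×n matrix, and R a symmetric positive definite m×m matrix. Set ΔK = K − L and A_ΔK = A + B·ΔK, and suppose a symmetric positive definite matrix ΔP satisfies the Lyapunov equation ΔP = A_ΔKᵀ ΔP A_ΔK + Q̃ + ΔKᵀ R ΔK. Let γ > 0 be a real number such that γ·(A_ΔKᵀ ΔP A_ΔK + Lᵀ Bᵀ ΔP B L) ⪯ Q̃ + ΔKᵀ R ΔK in the Loewner (positive semidefinite) order, and set τ = √(γ²/(1+γ)). Then for every real number α with |α − 1| < τ, the matrix A + B(K − α·L) is Schur stable. -/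
/-!
Write `N = A + B (K - L)`, `C = B L` and `ε = 1 - α`, so that the closed loop is `N + ε C` and
the Lyapunov equation reads `ΔP = Nᵀ ΔP N + S` with `S = Q̃ + ΔKᵀ R ΔK ≻ 0`. Completing the
square in the cross term `ε (Nᵀ ΔP C + Cᵀ ΔP N)` with a weight `δ > 0` gives
`ΔP - (N + ε C)ᵀ ΔP (N + ε C) ⪰ S - δ (Nᵀ ΔP N + Cᵀ ΔP C)` as soon as `ε² + ε²/δ ≤ δ`, and the
Loewner hypothesis makes the right-hand side positive definite once `δ < γ`. Such a `δ` exists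
exactly when `ε² (1 + γ) < γ²`, i.e. `|α - 1| < τ`. So `ΔP` is a strict Lyapunov function for
the perturbed loop, which forces every eigenvalue into the open unit disc.
-/

open Matrix

variable {ι : Type*}

lemma exists_pos_lt_sq_add_sq_div_le (γ ε : ℝ) (hγ : 0 < γ) (h : ε ^ 2 * (1 + γ) < γ ^ 2) :
    ∃ δ : ℝ, 0 < δ ∧ δ < γ ∧ ε ^ 2 + ε ^ 2 / δ ≤ δ := by
  have hd : 0 ≤ γ ^ 2 - ε ^ 2 * (1 + γ) := by linarith
  -- `δ = γ - f γ / (2γ)` for `f t = t² - ε² (t + 1)`; it works since `f (γ - η) ≥ f γ - 2γη`.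
  refine ⟨(γ ^ 2 + ε ^ 2 * (1 + γ)) / (2 * γ), by positivity, ?_, ?_⟩
  · rw [div_lt_iff₀ (by positivity)]; nlinarith
  · have hδ : 0 < (γ ^ 2 + ε ^ 2 * (1 + γ)) / (2 * γ) := by positivity
    rw [← sub_nonneg]
    field_simp
    nlinarith [mul_nonneg (mul_nonneg hγ.le (sq_nonneg ε)) hd]

lemma Matrix.PosDef.sub_smul_of_posSemidef_sub_smul {S X : Matrix ι ι ℝ} {γ δ : ℝ}
    (hS : S.PosDef) (hSX : (S - γ • X).PosSemidef) (hδ : 0 ≤ δ) (hδγ : δ < γ) :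
    (S - δ • X).PosDef := by
  have hγ : 0 < γ := hδ.trans_lt hδγ
  have hsplit : S - δ • X = (1 - δ / γ) • S + (δ / γ) • (S - γ • X) := by
    rw [smul_sub, smul_smul, div_mul_cancel₀ δ hγ.ne']
    module
  rw [hsplit]
  exact (hS.smul (by rw [sub_pos, div_lt_one hγ]; exact hδγ)).add_posSemidef
    (hSX.smul (by positivity))

variable [Fintype ι]

lemma Matrix.PosSemidef.transpose_mul_mul_same {κ : Type*} [Fintype κ] {P : Matrix κ κ ℝ}
    (hP : P.PosSemidef) (X : Matrix κ ι ℝ) : (Xᵀ * P * X).PosSemidef := by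
  simpa using hP.conjTranspose_mul_mul_same X

lemma lyapunov_decrement_eq {P N C S : Matrix ι ι ℝ} (hP : P = Nᵀ * P * N + S) (ε : ℝ)
    {δ : ℝ} (hδ : δ ≠ 0) :
    P - (N + ε • C)ᵀ * P * (N + ε • C)
      = S - δ • (Nᵀ * P * N + Cᵀ * P * C) + (δ - (ε ^ 2 + ε ^ 2 / δ)) • (Cᵀ * P * C)
        + δ⁻¹ • ((δ • N - ε • C)ᵀ * P * (δ • N - ε • C)) := by
  nth_rewrite 1 [hP]
  simp only [transpose_add, transpose_sub, transpose_smul, Matrix.add_mul, Matrix.mul_add,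
    Matrix.sub_mul, Matrix.mul_sub, Matrix.smul_mul, Matrix.mul_smul, smul_smul, smul_sub,
    smul_add, sub_smul]
  match_scalars <;> field_simp <;> ring

lemma Matrix.re_star_dotProduct_map_mulVec (P : Matrix ι ι ℝ) (v : ι → ℂ) :
    (star v ⬝ᵥ P.map (algebraMap ℝ ℂ) *ᵥ v).re
      = (fun i => (v i).re) ⬝ᵥ P *ᵥ (fun i => (v i).re)
        + (fun i => (v i).im) ⬝ᵥ P *ᵥ (fun i => (v i).im) := by
  simp only [dotProduct, mulVec, map_apply, Complex.re_sum, ← Finset.sum_add_distrib,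
    Pi.star_apply, Finset.mul_sum]
  refine Finset.sum_congr rfl fun i _ => Finset.sum_congr rfl fun j _ => ?_
  simp [Complex.mul_re, Complex.mul_im]

lemma Matrix.PosDef.re_star_dotProduct_map_mulVec_pos {P : Matrix ι ι ℝ} (hP : P.PosDef)
    {v : ι → ℂ} (hv : v ≠ 0) : 0 < (star v ⬝ᵥ P.map (algebraMap ℝ ℂ) *ᵥ v).re := by
  rw [re_star_dotProduct_map_mulVec]
  have hreim : (fun i => (v i).re) ≠ 0 ∨ (fun i => (v i).im) ≠ 0 := by
    by_contra! h
    exact hv (funext fun i => Complex.ext (congrFun h.1 i) (congrFun h.2 i))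
  rcases hreim with h | h
  · exact add_pos_of_pos_of_nonneg (hP.dotProduct_mulVec_pos h)
      (hP.posSemidef.dotProduct_mulVec_nonneg _)
  · exact add_pos_of_nonneg_of_pos (hP.posSemidef.dotProduct_mulVec_nonneg _)
      (hP.dotProduct_mulVec_pos h)

variable [DecidableEq ι]

theorem SchurStable.of_lyapunov {M P : Matrix ι ι ℝ} (hP : P.PosDef)
    (hdec : (P - Mᵀ * P * M).PosDef) : SchurStable M := by
  intro μ hμ
  set φ := algebraMap ℝ ℂ
  rw [← spectrum_toLin', ← Module.End.hasEigenvalue_iff_mem_spectrum] at hμ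
  obtain ⟨v, hv⟩ := hμ.exists_hasEigenvector
  have hMv : M.map φ *ᵥ v = μ • v := by simpa using hv.apply_eq_smul
  have hquad : star v ⬝ᵥ (Mᵀ * P * M).map φ *ᵥ v
      = (Complex.normSq μ : ℂ) * (star v ⬝ᵥ P.map φ *ᵥ v) := by
    have hMH : (M.map φ)ᴴ = (M.map φ)ᵀ := by
      ext i j
      simp [φ, conjTranspose_apply]
    rw [Matrix.map_mul, Matrix.map_mul, transpose_map, ← hMH, ← mulVec_mulVec, ← mulVec_mulVec,
      dotProduct_mulVec, ← star_mulVec, hMv, star_smul, mulVec_smul,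
      smul_dotProduct, dotProduct_smul, smul_eq_mul, smul_eq_mul, ← mul_assoc,
      Complex.normSq_eq_conj_mul_self]
    rfl
  have hpos := hdec.re_star_dotProduct_map_mulVec_pos hv.2
  rw [Matrix.map_sub _ (map_sub φ), sub_mulVec, dotProduct_sub, hquad, Complex.sub_re,
    Complex.re_ofReal_mul] at hpos
  have hnormSq : Complex.normSq μ < 1 := by
    nlinarith [hP.re_star_dotProduct_map_mulVec_pos hv.2]
  rwa [← Complex.sq_norm, sq_lt_one_iff₀ (norm_nonneg μ)] at hnormSq

theorem stmt_12 {n m : ℕ}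
    (A : Matrix (Fin n) (Fin n) ℝ) (B : Matrix (Fin n) (Fin m) ℝ)
    (K L : Matrix (Fin m) (Fin n) ℝ)
    (Qt : Matrix (Fin n) (Fin n) ℝ) (hQt : Qt.PosDef)
    (R : Matrix (Fin m) (Fin m) ℝ) (hR : R.PosDef)
    (ΔP : Matrix (Fin n) (Fin n) ℝ) (hΔP : ΔP.PosDef)
    (hLyap : ΔP = (A + B * (K - L))ᵀ * ΔP * (A + B * (K - L))
        + Qt + (K - L)ᵀ * R * (K - L))
    (γ : ℝ) (hγ : 0 < γ)
    (hLoewner : (Qt + (K - L)ᵀ * R * (K - L)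
        - γ • ((A + B * (K - L))ᵀ * ΔP * (A + B * (K - L))
            + Lᵀ * Bᵀ * ΔP * B * L)).PosSemidef)
    (α : ℝ) (hα : |α - 1| < Real.sqrt (γ ^ 2 / (1 + γ))) :
    SchurStable (A + B * (K - α • L)) := by
  set N := A + B * (K - L)
  set C := B * L
  set S := Qt + (K - L)ᵀ * R * (K - L)
  have hloop : A + B * (K - α • L) = N + (1 - α) • C := by
    simp only [N, C, Matrix.mul_sub, Matrix.mul_smul, sub_smul, one_smul]
    abel
  have hS : S.PosDef := hQt.add_posSemidef (hR.posSemidef.transpose_mul_mul_same _)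
  have hCC : Cᵀ * ΔP * C = Lᵀ * Bᵀ * ΔP * B * L := by
    simp only [C, transpose_mul, Matrix.mul_assoc]
  have hε : (1 - α) ^ 2 * (1 + γ) < γ ^ 2 := by
    rw [← lt_div_iff₀ (by positivity), ← neg_sub, neg_sq, ← sq_abs]
    exact (Real.lt_sqrt (abs_nonneg _)).mp hα
  obtain ⟨δ, hδ, hδγ, hδε⟩ := exists_pos_lt_sq_add_sq_div_le γ (1 - α) hγ hε
  rw [hloop]
  refine SchurStable.of_lyapunov hΔP ?_
  rw [lyapunov_decrement_eq (hLyap.trans (add_assoc _ _ _)) (1 - α) hδ.ne']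
  have hmain := hS.sub_smul_of_posSemidef_sub_smul (hCC ▸ hLoewner) hδ.le hδγ
  have hslack := (hΔP.posSemidef.transpose_mul_mul_same C).smul (sub_nonneg.mpr hδε)
  have hsquare := (hΔP.posSemidef.transpose_mul_mul_same (δ • N - (1 - α) • C)).smul
    (inv_nonneg.mpr hδ.le)
  exact (hmain.add_posSemidef hslack).add_posSemidef hsquare
end

section
/- Let M and N be complex n×n matrices, S a complex p×p matrix, and let μ be an eigenvalue of I_p ⊗ M + S ⊗ N (where ⊗ denotes the Kronecker product). Then there exists an eigenvalue λ of S such that μ is an eigenvalue of M + λ·N. -/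
/-!
The eigenspace of `1 ⊗ M + S ⊗ N` for `μ` is invariant under the commuting operator `S ⊗ 1`,
so over an algebraically closed field it contains an eigenvector `v` of `S ⊗ 1`, with eigenvalue
`λ` say. On `v` the operator `S ⊗ N = (1 ⊗ N)(S ⊗ 1)` acts as `λ (1 ⊗ N)`, so `v` is an
eigenvector of `1 ⊗ (M + λ N)` for `μ`. Finally `det (A ⊗ B) = det A ^ _ * det B ^ _` shows that
`1 ⊗ A` and `A ⊗ 1` have no eigenvalues besides those of `A`.
-/

open Matrix Module End
open scoped Kronecker

theorem Module.End.exists_hasEigenvector_of_commute {K V : Type*} [Field K] [IsAlgClosed K]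
    [AddCommGroup V] [Module K V] [FiniteDimensional K V] {f g : End K V} (hfg : Commute f g)
    {μ : K} (hμ : f.HasEigenvalue μ) : ∃ c v, f.HasEigenvector μ v ∧ g.HasEigenvector c v := by
  have hmaps : Set.MapsTo g (f.eigenspace μ) (f.eigenspace μ) :=
    mapsTo_genEigenspace_of_comm hfg μ 1
  have : Nontrivial (f.eigenspace μ) := Submodule.nontrivial_iff_ne_bot.2 hμ
  obtain ⟨c, hc⟩ := exists_eigenvalue (g.restrict hmaps)
  obtain ⟨⟨v, hvμ⟩, hv⟩ := hc.exists_hasEigenvector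
  have hv0 : v ≠ 0 := fun h ↦ hv.2 (Subtype.ext h)
  exact ⟨c, v, ⟨hvμ, hv0⟩, mem_eigenspace_iff.2 (congrArg Subtype.val hv.apply_eq_smul), hv0⟩

namespace Matrix

variable {R m n : Type*} [Fintype m] [Fintype n]

theorem _root_.Commute.kronecker [CommRing R] {A C : Matrix m m R} {B D : Matrix n n R}
    (hAC : Commute A C) (hBD : Commute B D) : Commute (A ⊗ₖ B) (C ⊗ₖ D) := by
  simp only [Commute, SemiconjBy, ← mul_kronecker_mul, hAC.eq, hBD.eq]

variable [DecidableEq m] [DecidableEq n]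

theorem spectrum_one_kronecker_subset [CommRing R] (A : Matrix n n R) :
    spectrum R ((1 : Matrix m m R) ⊗ₖ A) ⊆ spectrum R A := by
  intro μ
  rw [spectrum.mem_iff, spectrum.mem_iff, not_imp_not]
  intro hA
  have hsub : algebraMap R _ μ - (1 : Matrix m m R) ⊗ₖ A = 1 ⊗ₖ (algebraMap R _ μ - A) := by
    ext ⟨i, k⟩ ⟨j, l⟩
    simp only [sub_apply, algebraMap_matrix_apply, kroneckerMap_apply, one_apply, Prod.mk.injEq]
    split_ifs <;> simp_all
  rw [isUnit_iff_isUnit_det] at hA ⊢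
  rw [hsub, det_kronecker]
  simpa using hA.pow _

theorem spectrum_kronecker_one_subset [CommRing R] (A : Matrix m m R) :
    spectrum R (A ⊗ₖ (1 : Matrix n n R)) ⊆ spectrum R A := by
  intro μ
  rw [spectrum.mem_iff, spectrum.mem_iff, not_imp_not]
  intro hA
  have hsub : algebraMap R _ μ - A ⊗ₖ (1 : Matrix n n R) = (algebraMap R _ μ - A) ⊗ₖ 1 := by
    ext ⟨i, k⟩ ⟨j, l⟩
    simp only [sub_apply, algebraMap_matrix_apply, kroneckerMap_apply, one_apply, Prod.mk.injEq]
    split_ifs <;> simp_all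
  rw [isUnit_iff_isUnit_det] at hA ⊢
  rw [hsub, det_kronecker]
  simpa using hA.pow _

theorem hasEigenvector_toLin'_iff [CommRing R] {A : Matrix n n R} {μ : R} {v : n → R} :
    HasEigenvector A.toLin' μ v ↔ A *ᵥ v = μ • v ∧ v ≠ 0 := by
  rw [hasEigenvector_iff, mem_eigenspace_iff, toLin'_apply]

theorem mem_spectrum_of_hasEigenvector_toLin' [Field R] {A : Matrix n n R} {μ : R} {v : n → R}
    (hv : HasEigenvector A.toLin' μ v) : μ ∈ spectrum R A := by
  rw [← spectrum_toLin', ← hasEigenvalue_iff_mem_spectrum]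
  exact hasEigenvalue_of_hasEigenvector hv

theorem spectrum_one_kronecker_add_kronecker_subset [Field R] [IsAlgClosed R]
    (M N : Matrix n n R) (S : Matrix m m R) :
    spectrum R ((1 : Matrix m m R) ⊗ₖ M + S ⊗ₖ N) ⊆ ⋃ c ∈ spectrum R S, spectrum R (M + c • N) := by
  intro μ hμ
  have hcomm : Commute ((1 : Matrix m m R) ⊗ₖ M + S ⊗ₖ N) (S ⊗ₖ 1) :=
    ((Commute.one_left S).kronecker (Commute.one_right M)).add_left
      ((Commute.refl S).kronecker (Commute.one_right N))
  rw [← spectrum_toLin', ← hasEigenvalue_iff_mem_spectrum] at hμ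
  obtain ⟨c, v, hv, hvS⟩ := exists_hasEigenvector_of_commute (g := toLin' (S ⊗ₖ 1)) (by
    simp only [Commute, SemiconjBy, Module.End.mul_eq_comp, ← toLin'_mul, hcomm.eq]) hμ
  have hSN : S ⊗ₖ N *ᵥ v = (1 : Matrix m m R) ⊗ₖ (c • N) *ᵥ v := by
    rw [show S ⊗ₖ N = (1 : Matrix m m R) ⊗ₖ N * S ⊗ₖ 1 by
        rw [← mul_kronecker_mul, one_mul, mul_one], ← mulVec_mulVec,
      (hasEigenvector_toLin'_iff.1 hvS).1, mulVec_smul, kronecker_smul, smul_mulVec]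
  have hv' : HasEigenvector ((1 : Matrix m m R) ⊗ₖ (M + c • N)).toLin' μ v := by
    rw [hasEigenvector_toLin'_iff] at hv ⊢
    rw [← hv.1, kronecker_add, add_mulVec, add_mulVec, hSN]
    exact ⟨rfl, hv.2⟩
  exact Set.mem_biUnion
    (spectrum_kronecker_one_subset S (mem_spectrum_of_hasEigenvector_toLin' hvS))
    (spectrum_one_kronecker_subset _ (mem_spectrum_of_hasEigenvector_toLin' hv'))

end Matrix

theorem stmt_13 {n p : ℕ} (M N : Matrix (Fin n) (Fin n) ℂ)
    (S : Matrix (Fin p) (Fin p) ℂ) (μ : ℂ)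
    (hμ : μ ∈ spectrum ℂ ((1 : Matrix (Fin p) (Fin p) ℂ) ⊗ₖ M + S ⊗ₖ N)) :
    ∃ lam ∈ spectrum ℂ S, μ ∈ spectrum ℂ (M + lam • N) := by
  simpa using spectrum_one_kronecker_add_kronecker_subset M N S hμ
end

section
/- Let A be a real n×n matrix, B a real n×m matrix, K, L real m×n matrices, and S a symmetric real p×p matrix. Suppose that for every (real) eigenvalue λ of S, the matrix A + B(K − λ·L) is Schur stable. Then the matrix I_p ⊗ (A + BK) − S ⊗ (BL) is Schur stable. -/
/-!
Diagonalise `S = U D Uᵀ` with `U` orthogonal. Conjugation by `U ⊗ I` turns the matrix into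
`I ⊗ (A + BK) - D ⊗ BL`, and after swapping the Kronecker factors this is block diagonal with the
blocks `A + B (K - λ L)`, `λ` running over the eigenvalues of `S`. Similarity, permutation of
coordinates and passing to a block-diagonal matrix all preserve (the union of) spectra.
-/

open Matrix
open scoped Kronecker

namespace Matrix

theorem one_kronecker_sub_diagonal_kronecker {l n α : Type*} [DecidableEq l] [Ring α]
    (d : l → α) (X Y : Matrix n n α) :
    (1 : Matrix l l α) ⊗ₖ X - diagonal d ⊗ₖ Y =
      reindex (Equiv.prodComm _ _) (Equiv.prodComm _ _) (blockDiagonal fun i => X - d i • Y) := by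
  rw [one_kronecker, diagonal_kronecker]
  exact (congrArg (reindex _ _) (blockDiagonal_sub (fun _ => X) fun i => d i • Y)).symm

theorem one_kronecker_sub_conj_kronecker {l n α : Type*} [Fintype l] [DecidableEq l]
    [Fintype n] [DecidableEq n] [CommRing α] {U V : Matrix l l α}
    (hUV : U * V = 1) (D : Matrix l l α) (X Y : Matrix n n α) :
    (1 : Matrix l l α) ⊗ₖ X - (U * D * V) ⊗ₖ Y =
      (U ⊗ₖ (1 : Matrix n n α)) * ((1 : Matrix l l α) ⊗ₖ X - D ⊗ₖ Y) * (V ⊗ₖ 1) := by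
  simp only [Matrix.mul_sub, Matrix.sub_mul, ← mul_kronecker_mul, Matrix.mul_one, Matrix.one_mul,
    hUV]

theorem spectrum_blockDiagonal {n o K : Type*} [Fintype n] [DecidableEq n] [Fintype o]
    [DecidableEq o] [Field K] (M : o → Matrix n n K) :
    spectrum K (blockDiagonal M) = ⋃ i, spectrum K (M i) := by
  ext μ
  have hμ : (μ • 1 : Matrix (n × o) (n × o) K) = blockDiagonal fun _ => μ • 1 := by
    rw [← blockDiagonal_one, ← blockDiagonal_smul]
    rfl
  simp only [Set.mem_iUnion, spectrum.mem_iff, Algebra.algebraMap_eq_smul_one, hμ,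
    isUnit_iff_isUnit_det, ← blockDiagonal_sub, det_blockDiagonal, isUnit_iff_ne_zero,
    Finset.prod_ne_zero_iff, Finset.mem_univ, true_imp_iff, not_forall, not_not, Pi.sub_apply]

end Matrix

section SchurStable

variable {N N' ι : Type*} [Fintype N] [DecidableEq N] [Fintype N'] [DecidableEq N']
  [Fintype ι] [DecidableEq ι]

theorem schurStable_conj_iff {U V : Matrix N N ℝ} (hUV : U * V = 1) (M : Matrix N N ℝ) :
    SchurStable (U * M * V) ↔ SchurStable M := by
  let u : (Matrix N N ℂ)ˣ :=
    Units.map ((algebraMap ℝ ℂ).mapMatrix : Matrix N N ℝ →+* Matrix N N ℂ).toMonoidHom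
      ⟨U, V, hUV, mul_eq_one_comm.mp hUV⟩
  have hconj : (U * M * V).map (algebraMap ℝ ℂ) =
      (u : Matrix N N ℂ) * M.map (algebraMap ℝ ℂ) * ((u⁻¹ : (Matrix N N ℂ)ˣ) : Matrix N N ℂ) := by
    rw [Matrix.map_mul, Matrix.map_mul]
    rfl
  simp only [SchurStable, hconj, spectrum.units_conjugate]

theorem schurStable_reindex_iff (e : N ≃ N') (M : Matrix N N ℝ) :
    SchurStable (reindex e e M) ↔ SchurStable M := by
  have hmap : (reindex e e M).map (algebraMap ℝ ℂ) =
      reindexAlgEquiv ℂ ℂ e (M.map (algebraMap ℝ ℂ)) := by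
    simp [coe_reindexAlgEquiv, submatrix_map]
  simp only [SchurStable, hmap, AlgEquiv.spectrum_eq]

theorem schurStable_blockDiagonal_iff (M : ι → Matrix N N ℝ) :
    SchurStable (blockDiagonal M) ↔ ∀ i, SchurStable (M i) := by
  simp only [SchurStable, blockDiagonal_map _ _ (map_zero _), spectrum_blockDiagonal,
    Set.mem_iUnion, forall_exists_index]
  exact forall_comm

end SchurStable

theorem stmt_14 {n m p : ℕ}
    (A : Matrix (Fin n) (Fin n) ℝ) (B : Matrix (Fin n) (Fin m) ℝ)
    (K L : Matrix (Fin m) (Fin n) ℝ)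
    (S : Matrix (Fin p) (Fin p) ℝ) (hS : S.IsSymm)
    (h : ∀ lam ∈ spectrum ℝ S, SchurStable (A + B * (K - lam • L))) :
    SchurStable ((1 : Matrix (Fin p) (Fin p) ℝ) ⊗ₖ (A + B * K) - S ⊗ₖ (B * L)) := by
  have hH : S.IsHermitian := isHermitian_iff_isSymm.mpr hS
  obtain ⟨U, hUU, hS_diag⟩ : ∃ U : Matrix (Fin p) (Fin p) ℝ,
      U * star U = 1 ∧ S = U * diagonal hH.eigenvalues * star U := by
    refine ⟨hH.eigenvectorUnitary, Unitary.mul_star_self_of_mem hH.eigenvectorUnitary.2, ?_⟩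
    conv_lhs => rw [hH.spectral_theorem, Unitary.conjStarAlgAut_apply]
    simp only [RCLike.ofReal_real_eq_id, Function.id_comp]
  rw [hS_diag, one_kronecker_sub_conj_kronecker hUU, schurStable_conj_iff,
    one_kronecker_sub_diagonal_kronecker, schurStable_reindex_iff, schurStable_blockDiagonal_iff]
  · intro i
    have hi := h _ (hH.eigenvalues_mem_spectrum_real i)
    rwa [Matrix.mul_sub, Matrix.mul_smul, ← add_sub_assoc] at hi
  · rw [← mul_kronecker_mul, hUU, Matrix.one_mul, one_kronecker_one]
end

section
/- Let G be a simple graph on N vertices with adjacency matrix 𝒜 and maximum degree at most d − 1 for an integer d ≥ 2. Let A be a real n×n matrix, B a real n×m matrix, K, L real m×n matrices, and τ > 0 a real number such that A + B(K − α·L) is Schur stable for every real α with |α − 1| ≤ τ. Then the matrix I_N ⊗ (A + B(K − L)) + (τ/(d−1)) · (𝒜 ⊗ (B L)) is Schur stable. -/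
/-!
Diagonalise the symmetric adjacency matrix as `𝒜 = U Λ U*`. Conjugating by the unitary `U ⊗ I`
turns the matrix into a block diagonal one, and the spectrum of a block diagonal matrix is the
union of the spectra of its blocks. The block of an eigenvalue `λ` of `𝒜` is
`A + B (K - L) + c λ B L = A + B (K - α L)` with `c = τ / (d - 1)` and `α = 1 - c λ`; since
`|λ| ≤ d - 1` we get `|α - 1| ≤ τ`, so every block is Schur stable.
-/

open Matrix
open scoped Kronecker

namespace Matrix

variable {𝕜 ι κ : Type*} [Fintype ι] [DecidableEq ι] [Fintype κ] [DecidableEq κ]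

theorem spectrum_blockDiagonal_s15 [Field 𝕜] (M : ι → Matrix κ κ 𝕜) :
    spectrum 𝕜 (blockDiagonal M) = ⋃ i, spectrum 𝕜 (M i) := by
  ext μ
  have hsub : algebraMap 𝕜 _ μ - blockDiagonal M =
      blockDiagonal fun i => algebraMap 𝕜 _ μ - M i := by
    simp only [Algebra.algebraMap_eq_smul_one, ← blockDiagonal_one, ← blockDiagonal_smul,
      ← blockDiagonal_sub]
    rfl
  simp only [spectrum.mem_iff, Set.mem_iUnion, hsub, isUnit_iff_isUnit_det, det_blockDiagonal,
    isUnit_iff_ne_zero, Finset.prod_ne_zero_iff, Finset.mem_univ, true_implies, not_forall]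

theorem spectrum_one_kronecker_add_diagonal_kronecker [Field 𝕜] (a : ι → 𝕜) (C D : Matrix κ κ 𝕜) :
    spectrum 𝕜 (1 ⊗ₖ C + diagonal a ⊗ₖ D) = ⋃ i, spectrum 𝕜 (C + a i • D) := by
  have h : 1 ⊗ₖ C + diagonal a ⊗ₖ D =
      reindexAlgEquiv 𝕜 𝕜 (Equiv.prodComm κ ι) (blockDiagonal fun i => C + a i • D) := by
    rw [← diagonal_one, diagonal_kronecker, diagonal_kronecker, ← coe_reindexAlgEquiv 𝕜 𝕜,
      ← map_add, ← blockDiagonal_add]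
    simp only [one_smul]
    rfl
  rw [h, AlgEquiv.spectrum_eq, spectrum_blockDiagonal_s15]

omit [DecidableEq ι] in
theorem kronecker_one_mul_kronecker_mul_star [CommRing 𝕜] [StarRing 𝕜] (U X : Matrix ι ι 𝕜)
    (Y : Matrix κ κ 𝕜) :
    (U ⊗ₖ 1) * (X ⊗ₖ Y) * star (U ⊗ₖ 1) = (U * X * star U) ⊗ₖ Y := by
  rw [star_eq_conjTranspose, conjTranspose_kronecker, conjTranspose_one, ← mul_kronecker_mul,
    ← mul_kronecker_mul, one_mul, mul_one, star_eq_conjTranspose]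

theorem IsHermitian.spectrum_one_kronecker_add_kronecker [RCLike 𝕜] {H : Matrix ι ι 𝕜}
    (hH : H.IsHermitian) (C D : Matrix κ κ 𝕜) :
    spectrum 𝕜 (1 ⊗ₖ C + H ⊗ₖ D) = ⋃ i, spectrum 𝕜 (C + (hH.eigenvalues i : 𝕜) • D) := by
  let U := hH.eigenvectorUnitary
  let V : unitary (Matrix (ι × κ) (ι × κ) 𝕜) :=
    ⟨(U : Matrix ι ι 𝕜) ⊗ₖ 1, kronecker_mem_unitary U.2 (one_mem _)⟩
  have h : 1 ⊗ₖ C + H ⊗ₖ D = (V : Matrix _ _ 𝕜) *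
      (1 ⊗ₖ C + diagonal (RCLike.ofReal ∘ hH.eigenvalues) ⊗ₖ D) * star (V : Matrix _ _ 𝕜) := by
    rw [mul_add, add_mul, kronecker_one_mul_kronecker_mul_star,
      kronecker_one_mul_kronecker_mul_star, mul_one, Unitary.mul_star_self_of_mem U.2]
    conv_lhs => rw [hH.spectral_theorem, Unitary.conjStarAlgAut_apply]
  rw [h, Unitary.spectrum_star_right_conjugate, spectrum_one_kronecker_add_diagonal_kronecker]
  rfl

theorem map_kronecker {l m n p R S F : Type*} [Mul R] [Mul S] [FunLike F R S]
    [MulHomClass F R S] (f : F) (A : Matrix l m R) (B : Matrix n p R) :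
    (A ⊗ₖ B).map f = A.map f ⊗ₖ B.map f := by
  ext
  simp

end Matrix

namespace SimpleGraph

variable {V : Type*} [Fintype V] (G : SimpleGraph V) [DecidableRel G.Adj]

omit [Fintype V] in
theorem map_adjMatrix {R S : Type*} [NonAssocSemiring R] [NonAssocSemiring S] (f : R →+* S) :
    (G.adjMatrix R).map f = G.adjMatrix S := by
  ext
  simp [adjMatrix_apply, apply_ite f]

theorem norm_le_of_adjMatrix_mulVec_eq_smul {𝕜 : Type*} [NormedField 𝕜] {D : ℕ}
    (hdeg : ∀ v, G.degree v ≤ D) {μ : 𝕜} {x : V → 𝕜} (hx : x ≠ 0)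
    (hμ : G.adjMatrix 𝕜 *ᵥ x = μ • x) : ‖μ‖ ≤ D := by
  obtain ⟨u, hu⟩ := Function.ne_iff.mp hx
  obtain ⟨v, -, hv⟩ := Finset.exists_max_image Finset.univ (fun u => ‖x u‖) ⟨u, Finset.mem_univ u⟩
  have hxv : 0 < ‖x v‖ := (norm_pos_iff.mpr hu).trans_le (hv u (Finset.mem_univ u))
  refine le_of_mul_le_mul_right ?_ hxv
  calc ‖μ‖ * ‖x v‖ = ‖∑ u ∈ G.neighborFinset v, x u‖ := by
        rw [← adjMatrix_mulVec_apply, hμ, Pi.smul_apply, smul_eq_mul, norm_mul]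
    _ ≤ ∑ u ∈ G.neighborFinset v, ‖x u‖ := norm_sum_le _ _
    _ ≤ ∑ u ∈ G.neighborFinset v, ‖x v‖ := Finset.sum_le_sum fun u _ => hv u (Finset.mem_univ u)
    _ = G.degree v * ‖x v‖ := by rw [Finset.sum_const, card_neighborFinset_eq_degree, nsmul_eq_mul]
    _ ≤ D * ‖x v‖ := by gcongr; exact_mod_cast hdeg v

theorem abs_eigenvalues_adjMatrix_le [DecidableEq V] {𝕜 : Type*} [RCLike 𝕜] {D : ℕ}
    (hdeg : ∀ v, G.degree v ≤ D) (i : V) : |(G.isHermitian_adjMatrix 𝕜).eigenvalues i| ≤ D := by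
  have hA := G.isHermitian_adjMatrix 𝕜
  rw [← RCLike.norm_ofReal (K := 𝕜)]
  refine G.norm_le_of_adjMatrix_mulVec_eq_smul hdeg (x := hA.eigenvectorBasis i) ?_ ?_
  · simpa using hA.eigenvectorBasis.orthonormal.ne_zero i
  · rw [hA.mulVec_eigenvectorBasis, RCLike.real_smul_eq_coe_smul (K := 𝕜)]

end SimpleGraph

theorem stmt_15 {n m N : ℕ} (d : ℕ) (hd : 2 ≤ d)
    (G : SimpleGraph (Fin N)) [DecidableRel G.Adj]
    (hdeg : ∀ v, G.degree v ≤ d - 1)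
    (A : Matrix (Fin n) (Fin n) ℝ) (B : Matrix (Fin n) (Fin m) ℝ)
    (K L : Matrix (Fin m) (Fin n) ℝ)
    (τ : ℝ) (hτ : 0 < τ)
    (hstab : ∀ α : ℝ, |α - 1| ≤ τ → SchurStable (A + B * (K - α • L))) :
    SchurStable ((1 : Matrix (Fin N) (Fin N) ℝ) ⊗ₖ (A + B * (K - L))
      + (τ / ((d : ℝ) - 1)) • (G.adjMatrix ℝ ⊗ₖ (B * L))) := by
  intro μ hμ
  have hd' : (0 : ℝ) < d - 1 := by
    have : (2 : ℝ) ≤ d := by exact_mod_cast hd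
    linarith
  set c := τ / ((d : ℝ) - 1)
  set X := A + B * (K - L)
  set Y := B * L
  have hA := G.isHermitian_adjMatrix ℂ
  have hcomplex : (1 ⊗ₖ X + c • (G.adjMatrix ℝ ⊗ₖ Y)).map (algebraMap ℝ ℂ)
      = 1 ⊗ₖ X.map (algebraMap ℝ ℂ) + G.adjMatrix ℂ ⊗ₖ (c • Y).map (algebraMap ℝ ℂ) := by
    rw [← kronecker_smul, Matrix.map_add _ (map_add _), map_kronecker, map_kronecker,
      Matrix.map_one _ (map_zero _) (map_one _), G.map_adjMatrix]
  rw [hcomplex, hA.spectrum_one_kronecker_add_kronecker, Set.mem_iUnion] at hμ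
  obtain ⟨i, hi⟩ := hμ
  have hlam : |hA.eigenvalues i| ≤ d - 1 := by
    simpa [Nat.cast_sub (by omega : 1 ≤ d)] using G.abs_eigenvalues_adjMatrix_le hdeg i
  have hα : |(1 - c * hA.eigenvalues i) - 1| ≤ τ :=
    calc |(1 - c * hA.eigenvalues i) - 1| = c * |hA.eigenvalues i| := by
          rw [sub_sub_cancel_left, abs_neg, abs_mul, abs_of_pos (div_pos hτ hd')]
      _ ≤ c * (d - 1) := by gcongr
      _ = τ := div_mul_cancel₀ τ hd'.ne'
  have hblock :
      A + B * (K - (1 - c * hA.eigenvalues i) • L) = X + hA.eigenvalues i • (c • Y) := by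
    simp only [X, Y, Matrix.mul_sub, Matrix.mul_smul]
    module
  refine hstab _ hα μ ?_
  rwa [hblock, Matrix.map_add _ (map_add _), Matrix.map_smul' _ _ _ (map_mul _)]
end

section
/- Let G be a simple graph on N vertices with graph Laplacian matrix 𝓛 (Laplacian = degree matrix minus adjacency matrix), let Q₁ be a symmetric positive definite real n×n matrix, and let Q₂ be a symmetric positive semidefinite real n×n matrix. Then the Nn×Nn matrix I_N ⊗ Q₁ + 𝓛 ⊗ Q₂ is positive definite. -/
open Matrix
open scoped Kronecker

theorem stmt_16 {n N : ℕ} (G : SimpleGraph (Fin N)) [DecidableRel G.Adj]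
    (Q₁ Q₂ : Matrix (Fin n) (Fin n) ℝ)
    (hQ₁ : Q₁.PosDef) (hQ₂ : Q₂.PosSemidef) :
    ((1 : Matrix (Fin N) (Fin N) ℝ) ⊗ₖ Q₁ + G.lapMatrix ℝ ⊗ₖ Q₂).PosDef :=
  (PosDef.one.kronecker hQ₁).add_posSemidef ((G.posSemidef_lapMatrix ℝ).kronecker hQ₂)
end
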